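/- On the nilpotent Lie algebra 𝔫, the curvature R of the torsion connection ∇ associated with T = −2e₁₄₅ + e₁₃₆ + e₂₃₅ − e₂₄₆ is an SU(3)-instanton: for all X,Y,Z,V, (1) R(X,Y,Z,V) = R(Z,V,X,Y); (2) R(JX,JY,Z,V) = R(X,Y,Z,V); (3) Σᵢ R(eᵢ, Jeᵢ, Z, V) = 0 (sum over i = 1,…,6). -/

import Mathlib

open scoped BigOperators

noncomputable section

/-- The standard inner product on ℝ⁶. -/
def gIP (X Y : Fin 6 → ℝ) : ℝ := ∑ i, X i * Y i

/-- The standard orthonormal basis e₁,…,e₆ (0-indexed). -/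
def e (i : Fin 6) : Fin 6 → ℝ := fun j => if j = i then 1 else 0

/-- The 2-form e_{ij} (0-indexed). -/
def two (i j : Fin 6) (X Y : Fin 6 → ℝ) : ℝ := X i * Y j - X j * Y i

/-- The 3-form e_{ijk} (0-indexed). -/
def three (i j k : Fin 6) (X Y Z : Fin 6 → ℝ) : ℝ :=
  X i * (Y j * Z k - Y k * Z j) - X j * (Y i * Z k - Y k * Z i) + X k * (Y i * Z j - Y j * Z i)

/-- The 4-form e_{ijkl} (0-indexed). -/
def four (i j k l : Fin 6) (X Y Z W : Fin 6 → ℝ) : ℝ :=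
  X i * three j k l Y Z W - X j * three i k l Y Z W
    + X k * three i j l Y Z W - X l * three i j k Y Z W

/-- F = −e₁₂ − e₃₄ − e₅₆. -/
def Fform (X Y : Fin 6 → ℝ) : ℝ := -two 0 1 X Y - two 2 3 X Y - two 4 5 X Y

/-- Ψ⁺ = −e₁₃₅ + e₂₃₆ + e₁₄₆ + e₂₄₅. -/
def Psip (X Y Z : Fin 6 → ℝ) : ℝ :=
  -three 0 2 4 X Y Z + three 1 2 5 X Y Z + three 0 3 5 X Y Z + three 1 3 4 X Y Z

/-- Ψ⁻ = −e₁₃₆ − e₁₄₅ − e₂₃₅ + e₂₄₆. -/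
def Psim (X Y Z : Fin 6 → ℝ) : ℝ :=
  -three 0 2 5 X Y Z - three 0 3 4 X Y Z - three 1 2 4 X Y Z + three 1 3 5 X Y Z

/-- Φ(X,Y,Z,V) = F(X,Y)F(Z,V) + F(Y,Z)F(X,V) + F(Z,X)F(Y,V). -/
def Phi (X Y Z V : Fin 6 → ℝ) : ℝ :=
  Fform X Y * Fform Z V + Fform Y Z * Fform X V + Fform Z X * Fform Y V

/-- The orthogonal complex structure: Je₁=e₂, Je₂=−e₁, Je₃=e₄, Je₄=−e₃, Je₅=e₆, Je₆=−e₅. -/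
def Jc (X : Fin 6 → ℝ) : Fin 6 → ℝ := ![-X 1, X 0, -X 3, X 2, -X 5, X 4]

/-- Θ⁺ = e₁₃₅ − e₁₄₆ − e₂₃₆ − e₂₄₅. -/
def Thp (X Y Z : Fin 6 → ℝ) : ℝ :=
  three 0 2 4 X Y Z - three 0 3 5 X Y Z - three 1 2 5 X Y Z - three 1 3 4 X Y Z

/-- Θ⁻ = e₁₃₆ + e₁₄₅ + e₂₃₅ − e₂₄₆. -/
def Thm (X Y Z : Fin 6 → ℝ) : ℝ :=
  three 0 2 5 X Y Z + three 0 3 4 X Y Z + three 1 2 4 X Y Z - three 1 3 5 X Y Z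

/-- Nijenhuis tensor N(X,Y) = [JX,JY] − [X,Y] − J[JX,Y] − J[X,JY] for a bracket `br`. -/
def Nij (br : (Fin 6 → ℝ) → (Fin 6 → ℝ) → (Fin 6 → ℝ)) (X Y : Fin 6 → ℝ) : Fin 6 → ℝ :=
  br (Jc X) (Jc Y) - br X Y - Jc (br (Jc X) Y) - Jc (br X (Jc Y))

/-- Chevalley–Eilenberg differential of a 2-form. -/
def d2 (br : (Fin 6 → ℝ) → (Fin 6 → ℝ) → (Fin 6 → ℝ))
    (α : (Fin 6 → ℝ) → (Fin 6 → ℝ) → ℝ) (X Y Z : Fin 6 → ℝ) : ℝ :=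
  -α (br X Y) Z + α (br X Z) Y - α (br Y Z) X

/-- Chevalley–Eilenberg differential of a 3-form. -/
def d3 (br : (Fin 6 → ℝ) → (Fin 6 → ℝ) → (Fin 6 → ℝ))
    (α : (Fin 6 → ℝ) → (Fin 6 → ℝ) → (Fin 6 → ℝ) → ℝ) (X Y Z W : Fin 6 → ℝ) : ℝ :=
  -α (br X Y) Z W + α (br X Z) Y W - α (br X W) Y Z
    - α (br Y Z) X W + α (br Y W) X Z - α (br Z W) X Y

/-- The torsion connection ∇ associated with a bracket `br` and a 3-form `T`:
g(∇_X Y, Z) = ½( g([X,Y],Z) − g([Y,Z],X) + g([Z,X],Y) + T(X,Y,Z) ). -/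
def nab (br : (Fin 6 → ℝ) → (Fin 6 → ℝ) → (Fin 6 → ℝ))
    (T : (Fin 6 → ℝ) → (Fin 6 → ℝ) → (Fin 6 → ℝ) → ℝ)
    (X Y : Fin 6 → ℝ) : Fin 6 → ℝ :=
  fun m => (1/2) * (gIP (br X Y) (e m) - gIP (br Y (e m)) X + gIP (br (e m) X) Y + T X Y (e m))

/-- The covariant derivative of a 3-form α:
(∇_X α)(Y,Z,V) = −α(∇_X Y,Z,V) − α(Y,∇_X Z,V) − α(Y,Z,∇_X V). -/
def nabForm3 (br : (Fin 6 → ℝ) → (Fin 6 → ℝ) → (Fin 6 → ℝ))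
    (T α : (Fin 6 → ℝ) → (Fin 6 → ℝ) → (Fin 6 → ℝ) → ℝ)
    (X Y Z V : Fin 6 → ℝ) : ℝ :=
  -α (nab br T X Y) Z V - α Y (nab br T X Z) V - α Y Z (nab br T X V)

/-- Curvature R(X,Y)Z = ∇_X∇_Y Z − ∇_Y∇_X Z − ∇_{[X,Y]}Z. -/
def Rmap (br : (Fin 6 → ℝ) → (Fin 6 → ℝ) → (Fin 6 → ℝ))
    (T : (Fin 6 → ℝ) → (Fin 6 → ℝ) → (Fin 6 → ℝ) → ℝ)
    (X Y Z : Fin 6 → ℝ) : Fin 6 → ℝ :=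
  nab br T X (nab br T Y Z) - nab br T Y (nab br T X Z) - nab br T (br X Y) Z

/-- R(X,Y,Z,V) = g(R(X,Y)Z,V). -/
def R4 (br : (Fin 6 → ℝ) → (Fin 6 → ℝ) → (Fin 6 → ℝ))
    (T : (Fin 6 → ℝ) → (Fin 6 → ℝ) → (Fin 6 → ℝ) → ℝ)
    (X Y Z V : Fin 6 → ℝ) : ℝ :=
  gIP (Rmap br T X Y Z) V

/-- The Lie bracket of the nilpotent Lie algebra 𝔫: [e₃,e₆]=−e₁, [e₂,e₆]=−e₄, [e₂,e₃]=−e₅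
(bilinear extension). -/
def brNil (X Y : Fin 6 → ℝ) : Fin 6 → ℝ :=
  (-two 2 5 X Y) • e 0 + (-two 1 5 X Y) • e 3 + (-two 1 2 X Y) • e 4

/-- The torsion 3-form T = −2e₁₄₅ + e₁₃₆ + e₂₃₅ − e₂₄₆ on 𝔫. -/
def TNil (X Y Z : Fin 6 → ℝ) : ℝ :=
  -2 * three 0 3 4 X Y Z + three 0 2 5 X Y Z + three 1 2 4 X Y Z - three 1 3 5 X Y Z

/-! The torsion connection of `T` is `∇_X = X₁ A + X₄ B + X₅ C` for three skew endomorphisms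
`A, B, C`, and a direct computation gives `R = ω₁ ⊗ ω₁ + ω₂ ⊗ ω₂ + ω₃ ⊗ ω₃` with
`ω₁ = e₁₄ − e₂₃`, `ω₂ = e₁₅ + e₂₆`, `ω₃ = e₃₆ − e₄₅`. Each `ωₐ` is a `J`-invariant 2-form with no
`e₁₂, e₃₄, e₅₆` component, i.e. lies in `𝔰𝔲(3)`; a curvature of the form `∑ ωₐ ⊗ ωₐ` with such
`ωₐ` is pair symmetric, `J`-invariant and traceless against `F`. -/

section TensorSquareSum

variable {ι V : Type*} [Fintype ι]

def tensorSquareSum (ω : ι → V → V → ℝ) (X Y Z W : V) : ℝ :=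
  ∑ a, ω a X Y * ω a Z W

theorem tensorSquareSum_swap (ω : ι → V → V → ℝ) (X Y Z W : V) :
    tensorSquareSum ω X Y Z W = tensorSquareSum ω Z W X Y := by
  simp only [tensorSquareSum, mul_comm]

theorem tensorSquareSum_map_map (ω : ι → V → V → ℝ) (J : V → V)
    (hJ : ∀ a X Y, ω a (J X) (J Y) = ω a X Y) (X Y Z W : V) :
    tensorSquareSum ω (J X) (J Y) Z W = tensorSquareSum ω X Y Z W := by
  simp only [tensorSquareSum, hJ]

theorem sum_tensorSquareSum_eq_zero {κ : Type*} [Fintype κ] (ω : ι → V → V → ℝ) (J : V → V)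
    (b : κ → V) (hω : ∀ a, ∑ i, ω a (b i) (J (b i)) = 0) (Z W : V) :
    ∑ i, tensorSquareSum ω (b i) (J (b i)) Z W = 0 := by
  simp only [tensorSquareSum]
  rw [Finset.sum_comm]
  simp only [← Finset.sum_mul, hω, zero_mul, Finset.sum_const_zero]

end TensorSquareSum

theorem nab_brNil_TNil (X Y : Fin 6 → ℝ) :
    nab brNil TNil X Y =
      ![-X 3 * Y 4 + X 4 * Y 3, -X 3 * Y 5 - X 4 * Y 2, -X 0 * Y 5 + X 4 * Y 1,
        X 0 * Y 4 - X 4 * Y 0, -X 0 * Y 3 + X 3 * Y 0, X 0 * Y 2 + X 3 * Y 1] := by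
  funext m
  fin_cases m <;> simp [nab, brNil, TNil, gIP, two, three, e, Fin.sum_univ_six] <;> ring

def curvatureForm : Fin 3 → (Fin 6 → ℝ) → (Fin 6 → ℝ) → ℝ :=
  ![two 0 3 - two 1 2, two 0 4 + two 1 5, two 2 5 - two 3 4]

theorem R4_brNil_TNil (X Y Z V : Fin 6 → ℝ) :
    R4 brNil TNil X Y Z V = tensorSquareSum curvatureForm X Y Z V := by
  simp only [R4, Rmap, nab_brNil_TNil, tensorSquareSum, curvatureForm, gIP, Fin.sum_univ_six,
    Fin.sum_univ_three, Pi.sub_apply]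
  simp [brNil, two, e]
  ring

theorem curvatureForm_Jc (a : Fin 3) (X Y : Fin 6 → ℝ) :
    curvatureForm a (Jc X) (Jc Y) = curvatureForm a X Y := by
  fin_cases a <;> simp [curvatureForm, two, Jc] <;> ring

theorem sum_curvatureForm_e_Jc_e (a : Fin 3) : ∑ i, curvatureForm a (e i) (Jc (e i)) = 0 := by
  fin_cases a <;> simp [curvatureForm, two, Jc, e, Fin.sum_univ_six]

/-- on 𝔫, the curvature of the torsion connection is an SU(3)-instanton. -/
theorem stmt19 :
    (∀ X Y Z V : Fin 6 → ℝ, R4 brNil TNil X Y Z V = R4 brNil TNil Z V X Y) ∧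
    (∀ X Y Z V : Fin 6 → ℝ, R4 brNil TNil (Jc X) (Jc Y) Z V = R4 brNil TNil X Y Z V) ∧
    (∀ Z V : Fin 6 → ℝ, ∑ i, R4 brNil TNil (e i) (Jc (e i)) Z V = 0) := by
  simp only [R4_brNil_TNil]
  exact ⟨tensorSquareSum_swap curvatureForm,
    tensorSquareSum_map_map curvatureForm Jc curvatureForm_Jc,
    sum_tensorSquareSum_eq_zero curvatureForm Jc e sum_curvatureForm_e_Jc_e⟩
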